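/- arXiv:0904.0134 — 4 statements merged into one kernel-verified Lean document; each statement's English description precedes it below -/
import Mathlib

section
/- Let V be a rational vector space with a symmetric bilinear form (·,·) such that (α,α) and (β,β) are positive rationals for vectors α, β, and suppose the integers a := 2(β,α)/(α,α) and b := 2(α,β)/(β,β) are well-defined. Then the form (·,·) is positive semidefinite on the rational span of {α,β} if and only if a·b ∈ {0,1,2,3,4}. -/
theorem stmt_0 {V : Type*} [AddCommGroup V] [Module ℚ V]
    (B : V →ₗ[ℚ] V →ₗ[ℚ] ℚ) (hsymm : ∀ x y, B x y = B y x)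
    (α β : V) (hα : 0 < B α α) (hβ : 0 < B β β)
    (a b : ℤ) (ha : (a : ℚ) = 2 * B β α / B α α) (hb : (b : ℚ) = 2 * B α β / B β β) :
    (∀ v ∈ Submodule.span ℚ ({α, β} : Set V), 0 ≤ B v v) ↔
      a * b ∈ ({0, 1, 2, 3, 4} : Set ℤ) := by
  set A := B α α with hAdef
  set D := B β β with hDdef
  have hC : B β α = B α β := hsymm β α
  set C := B α β with hCdef
  have ha' : (a : ℚ) * A = 2 * C := by
    rw [ha, hC]; field_simp
  have hb' : (b : ℚ) * D = 2 * C := by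
    rw [hb]; field_simp
  have key : (a : ℚ) * b * (A * D) = 4 * C ^ 2 := by
    linear_combination (b : ℚ) * D * ha' + 2 * C * hb'
  have habnn : (0 : ℚ) ≤ (a : ℚ) * b := by
    nlinarith [sq_nonneg C, mul_pos hα hβ]
  have habnnZ : (0 : ℤ) ≤ a * b := by
    exact_mod_cast (by push_cast; exact habnn : (0:ℚ) ≤ ((a*b : ℤ) : ℚ))
  constructor
  · intro h
    have hv : D • α - C • β ∈ Submodule.span ℚ ({α, β} : Set V) := by
      apply Submodule.sub_mem <;> apply Submodule.smul_mem <;>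
        apply Submodule.subset_span <;> simp
    have h1 := h _ hv
    have hBvv : B (D • α - C • β) (D • α - C • β) = D * D * A - D * C ^ 2 := by
      simp only [map_sub, map_smul, LinearMap.sub_apply, LinearMap.smul_apply,
        smul_eq_mul]
      rw [hC]; ring
    rw [hBvv] at h1
    have hCS : C ^ 2 ≤ A * D := by nlinarith
    have hle : (a : ℚ) * b ≤ 4 := by nlinarith [mul_pos hα hβ]
    have hleZ : a * b ≤ 4 := by exact_mod_cast (by push_cast; exact hle : ((a*b : ℤ) : ℚ) ≤ 4)
    simp only [Set.mem_insert_iff, Set.mem_singleton_iff]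
    omega
  · intro h
    simp only [Set.mem_insert_iff, Set.mem_singleton_iff] at h
    have hleZ : a * b ≤ 4 := by omega
    have hle : (a : ℚ) * b ≤ 4 := by exact_mod_cast (by exact_mod_cast hleZ : ((a*b : ℤ) : ℚ) ≤ 4)
    have hCS : C ^ 2 ≤ A * D := by nlinarith [mul_pos hα hβ]
    intro v hv
    obtain ⟨c, d, rfl⟩ := Submodule.mem_span_pair.mp hv
    have hBvv : B (c • α + d • β) (c • α + d • β) =
        c ^ 2 * A + 2 * c * d * C + d ^ 2 * D := by
      simp only [map_add, map_smul, LinearMap.add_apply, LinearMap.smul_apply,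
        smul_eq_mul]
      rw [hC]; ring
    rw [hBvv]
    nlinarith [sq_nonneg (c * A + d * C), mul_nonneg (sq_nonneg d) (sub_nonneg.2 hCS), hα]
end

section
/- Let Δ be a set of vectors in a rational vector space with positive definite rational square lengths, closed under reflections, such that all Cartan integers exist and all pairwise products of Cartan integers are at most 4, and such that Δ is connected (any two elements joined by a chain of non-orthogonal pairs). If the minimal square length in Δ is normalized to 1, then the set of square lengths occurring in Δ is contained in {1,3} or in {1,2,4}. -/
theorem stmt_3 {V : Type*} [AddCommGroup V] [Module ℚ V]
    (B : V →ₗ[ℚ] V →ₗ[ℚ] ℚ) (hsymm : ∀ x y, B x y = B y x)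
    (Δ : Set V)
    (hpos : ∀ α ∈ Δ, 0 < B α α)
    (hrefl : ∀ α ∈ Δ, ∀ β ∈ Δ, β - (2 * B β α / B α α) • α ∈ Δ)
    (hint : ∀ α ∈ Δ, ∀ β ∈ Δ, ∃ n : ℤ, (n : ℚ) = 2 * B β α / B α α)
    (h2aff : ∀ α ∈ Δ, ∀ β ∈ Δ, (2 * B β α / B α α) * (2 * B α β / B β β) ≤ 4)
    (hconn : ∀ α ∈ Δ, ∀ β ∈ Δ,
      Relation.ReflTransGen (fun x y => x ∈ Δ ∧ y ∈ Δ ∧ B x y ≠ 0) α β)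
    (hnorm : ∀ α ∈ Δ, 1 ≤ B α α) (hmin : ∃ α ∈ Δ, B α α = 1) :
    {q : ℚ | ∃ α ∈ Δ, B α α = q} ⊆ {1, 3} ∨
      {q : ℚ | ∃ α ∈ Δ, B α α = q} ⊆ {1, 2, 4} := by
  classical
  have hBsub : ∀ (x y z : V) (c : ℚ), B (x - c • y) z = B x z - c * B y z := by
    intro x y z c
    simp [map_sub, map_smul]
  have hBsub' : ∀ (x y z : V) (c : ℚ), B x (y - c • z) = B x y - c * B x z := by
    intro x y z c
    simp [map_sub, map_smul]
  -- reflections preserve length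
  have hlen : ∀ α ∈ Δ, ∀ β ∈ Δ,
      B (β - (2 * B β α / B α α) • α) (β - (2 * B β α / B α α) • α) = B β β := by
    intro α hα β hβ
    have ha := (hpos α hα).ne'
    rw [hBsub, hBsub', hBsub', hsymm α β]
    field_simp
    ring
  -- for any α β in Δ, there is a root of the same length as α not orthogonal to β
  have key1 : ∀ α ∈ Δ, ∀ β ∈ Δ, ∃ γ ∈ Δ, B γ γ = B α α ∧ B γ β ≠ 0 := by
    intro α hα β hβ
    have h := hconn α hα β hβ
    clear hβ
    induction h with
    | refl => exact ⟨α, hα, rfl, (hpos α hα).ne'⟩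
    | @tail b c hab hbc ih =>
      obtain ⟨hb, hc, hbc0⟩ := hbc
      obtain ⟨γ, hγ, hγlen, hγb⟩ := ih
      by_cases hγc : B γ c = 0
      · refine ⟨γ - (2 * B γ b / B b b) • b, hrefl b hb γ hγ, ?_, ?_⟩
        · rw [hlen b hb γ hγ, hγlen]
        · rw [hBsub, hγc]
          have hbb := (hpos b hb).ne'
          have hcne : 2 * B γ b / B b b ≠ 0 := by
            apply div_ne_zero _ hbb
            simpa using hγb
          simpa using mul_ne_zero hcne hbc0
      · exact ⟨γ, hγ, hγlen, hγc⟩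
  -- ratio lemma
  have key2 : ∀ α ∈ Δ, ∀ β ∈ Δ, B α β ≠ 0 →
      ∃ n m : ℤ, 0 < n ∧ 0 < m ∧ n * m ≤ 4 ∧ B β β * m = B α α * n := by
    intro α hα β hβ hab
    obtain ⟨n, hn⟩ := hint α hα β hβ
    obtain ⟨m, hm⟩ := hint β hβ α hα
    have ha := hpos α hα
    have hb := hpos β hβ
    have hba : B β α ≠ 0 := by rw [hsymm]; exact hab
    have heq : B β β * m = B α α * n := by
      rw [hn, hm, hsymm β α]
      field_simp
    have hprodpos : (0:ℚ) < n * m := by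
      rw [hn, hm, hsymm β α]
      rw [div_mul_div_comm]
      apply div_pos
      · nlinarith [mul_self_pos.mpr hab]
      · positivity
    have hprod4 : (n : ℚ) * m ≤ 4 := by
      rw [hn, hm]; exact h2aff α hα β hβ
    have hnm4 : n * m ≤ 4 := by exact_mod_cast hprod4
    have hnm1 : 0 < n * m := by exact_mod_cast hprodpos
    rcases lt_trichotomy n 0 with hneg | rfl | hposn
    · refine ⟨-n, -m, by omega, by nlinarith, by nlinarith, ?_⟩
      simp only [Int.cast_neg]
      linarith [heq]
    · simp at hnm1
    · refine ⟨n, m, hposn, by nlinarith, hnm4, heq⟩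
  -- all lengths are in {1,2,3,4}
  have key3 : ∀ β ∈ Δ, B β β = 1 ∨ B β β = 2 ∨ B β β = 3 ∨ B β β = 4 := by
    intro β hβ
    obtain ⟨α, hα, hα1⟩ := hmin
    obtain ⟨γ, hγ, hγlen, hγβ⟩ := key1 α hα β hβ
    obtain ⟨n, m, hn, hm, hnm, heq⟩ := key2 γ hγ β hβ hγβ
    rw [hγlen, hα1] at heq
    have hb1 := hnorm β hβ
    have hmQ : (0:ℚ) < (m:ℚ) := by exact_mod_cast hm
    have hmn : m ≤ n := by
      have h' : (m:ℚ) ≤ (n:ℚ) := by nlinarith [heq, hmQ, hb1]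
      exact_mod_cast h'
    have hn4 : n ≤ 4 := by nlinarith
    interval_cases n <;> interval_cases m <;>
      first
        | omega
        | (push_cast at heq; first
            | (left; linarith)
            | (right; left; linarith)
            | (right; right; left; linarith)
            | (right; right; right; linarith))
  -- 3 cannot coexist with 2 or 4
  have key4 : ∀ q : ℚ, (q = 2 ∨ q = 4) → (∃ β ∈ Δ, B β β = 3) →
      (∃ γ ∈ Δ, B γ γ = q) → False := by
    rintro q hq ⟨β, hβ, hβ3⟩ ⟨γ, hγ, hγq⟩
    obtain ⟨δ, hδ, hδlen, hδγ⟩ := key1 β hβ γ hγ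
    obtain ⟨n, m, hn, hm, hnm, heq⟩ := key2 δ hδ γ hγ hδγ
    rw [hδlen, hβ3, hγq] at heq
    have hn4 : n ≤ 4 := by nlinarith
    have hm4 : m ≤ 4 := by nlinarith
    rcases hq with rfl | rfl
    · have h' : (2:ℤ) * m = 3 * n := by exact_mod_cast heq
      interval_cases n <;> omega
    · have h' : (4:ℤ) * m = 3 * n := by exact_mod_cast heq
      interval_cases n <;> omega
  by_cases h3 : ∃ β ∈ Δ, B β β = 3
  · left
    rintro q ⟨β, hβ, rfl⟩
    rcases key3 β hβ with h | h | h | h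
    · exact Or.inl h
    · exact absurd (key4 _ (Or.inl rfl) h3 ⟨β, hβ, h⟩) not_false
    · exact Or.inr h
    · exact absurd (key4 _ (Or.inr rfl) h3 ⟨β, hβ, h⟩) not_false
  · right
    rintro q ⟨β, hβ, rfl⟩
    rcases key3 β hβ with h | h | h | h
    · exact Or.inl h
    · exact Or.inr (Or.inl h)
    · exact absurd ⟨β, hβ, h⟩ h3
    · exact Or.inr (Or.inr h)
end

section
/- Let (g, κ) be a quadratic Lie algebra and D a κ-skew-symmetric derivation. The double extension g̃ = K ⊕ g ⊕ K with bracket [(z,x,t),(z',x',t')] = (κ(Dx,x'), [x,x'] + tDx' − t'Dx, 0) is a Lie algebra, and κ̃((z,x,t),(z',x',t')) = κ(x,x') + zt' + z't is a nondegenerate invariant symmetric bilinear form on g̃. -/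
theorem stmt_10 {K : Type*} [Field K] [CharZero K]
    {g : Type*} [LieRing g] [LieAlgebra K g]
    (κ : g →ₗ[K] g →ₗ[K] K) (hsymm : ∀ x y, κ x y = κ y x)
    (hinv : ∀ x y z, κ ⁅x, y⁆ z = κ x ⁅y, z⁆)
    (hnd : ∀ x, (∀ y, κ x y = 0) → x = 0)
    (D : g →ₗ[K] g) (hder : ∀ x y, D ⁅x, y⁆ = ⁅D x, y⁆ + ⁅x, D y⁆)
    (hskew : ∀ x y, κ (D x) y = - κ x (D y))
    (br : K × g × K → K × g × K → K × g × K)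
    (hbr : ∀ u v, br u v =
      (κ (D u.2.1) v.2.1, ⁅u.2.1, v.2.1⁆ + u.2.2 • D v.2.1 - v.2.2 • D u.2.1, 0))
    (κt : K × g × K → K × g × K → K)
    (hκt : ∀ u v, κt u v = κ u.2.1 v.2.1 + u.1 * v.2.2 + v.1 * u.2.2) :
    (∀ u, br u u = 0) ∧
      (∀ u v w, br u (br v w) = br (br u v) w + br v (br u w)) ∧
      (∀ u v w, br (u + v) w = br u w + br v w) ∧
      (∀ (c : K) u v, br (c • u) v = c • br u v) ∧
      (∀ u v, κt u v = κt v u) ∧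
      (∀ u v w, κt (br u v) w = κt u (br v w)) ∧
      (∀ u, (∀ v, κt u v = 0) → u = 0) := by
  have key : ∀ x, κ (D x) x = 0 := by
    intro x
    have h1 := hskew x x
    rw [hsymm x (D x)] at h1
    have h2 : (2 : K) * κ (D x) x = 0 := by linear_combination h1
    rcases mul_eq_zero.mp h2 with h | h
    · exact absurd h two_ne_zero
    · exact h
  refine ⟨?_, ?_, ?_, ?_, ?_, ?_, ?_⟩
  · intro u
    simp [hbr, Prod.ext_iff, key]
  · rintro ⟨z1, x, t1⟩ ⟨z2, y, t2⟩ ⟨z3, z, t3⟩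
    have h1 : κ ⁅x, D y⁆ z = - κ (D y) ⁅x, z⁆ := by
      rw [(lie_skew x (D y)).symm, map_neg, LinearMap.neg_apply, hinv]
    simp only [hbr, Prod.ext_iff, Prod.fst_add, Prod.snd_add]
    refine ⟨?_, ?_, by simp⟩
    · simp only [map_add, map_sub, map_smul, LinearMap.add_apply, LinearMap.sub_apply,
        LinearMap.smul_apply, smul_eq_mul, hder, smul_zero, zero_smul, sub_zero, map_zero]
      linear_combination (-1 : K) * hinv (D x) y z - h1 + t2 * hskew (D x) z -
        t1 * hskew (D y) z - t3 * hsymm (D x) (D y)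
    · simp only [lie_add, add_lie, lie_sub, sub_lie, lie_smul, smul_lie, map_add, map_sub,
        map_smul, smul_add, smul_sub, smul_smul, hder, smul_zero, zero_smul, lie_self,
        sub_zero, add_zero, zero_sub, sub_neg_eq_add, map_zero]
      rw [leibniz_lie x y z, (lie_skew y (D x)).symm]
      module
  · rintro ⟨z1, x, t1⟩ ⟨z2, y, t2⟩ ⟨z3, z, t3⟩
    simp only [hbr, Prod.ext_iff, Prod.mk_add_mk, Prod.fst_add, Prod.snd_add]
    refine ⟨?_, ?_, ?_⟩
    · simp
    · simp only [add_lie, map_add, LinearMap.add_apply, smul_add]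
      module
    · simp
  · rintro c ⟨z1, x, t1⟩ ⟨z2, y, t2⟩
    simp only [hbr, Prod.smul_mk, Prod.ext_iff, smul_eq_mul]
    refine ⟨?_, ?_, ?_⟩
    · simp [smul_eq_mul]
    · simp only [smul_lie, map_smul, LinearMap.smul_apply, smul_sub, smul_add, smul_smul]
      module
    · simp
  · intro u v
    simp only [hκt, hsymm]
    ring
  · rintro ⟨z1, x, t1⟩ ⟨z2, y, t2⟩ ⟨z3, z, t3⟩
    simp only [hbr, hκt, map_add, map_sub, map_smul, LinearMap.add_apply, LinearMap.sub_apply,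
      LinearMap.smul_apply, smul_eq_mul]
    linear_combination hinv x y z - t2 * hskew x z + t3 * hskew x y
  · rintro ⟨z1, x, t1⟩ h
    have hx : x = 0 := by
      apply hnd
      intro y
      have := h (0, y, 0)
      simpa [hκt] using this
    have ht : t1 = 0 := by
      have := h (1, 0, 0)
      simpa [hκt] using this
    have hz : z1 = 0 := by
      have := h (0, 0, 1)
      simpa [hκt] using this
    simp [hx, ht, hz]
end

section
/- Let D_J = {±ε_j ± ε_k : j ≠ k} and C_J = {±2ε_j} ∪ D_J be root systems in ℚ^{(J)} with the standard inner product, and consider the sets Δ₁ = (D_J × ℤ) ∪ ((C_J)_lg × (2ℤ+1)) and Δ₂ = (C_J × 2ℤ) ∪ (D_J × (2ℤ+1)) inside ℚ^{(J)} × ℚ, where (C_J)_lg = {±2ε_j}. Then the linear map determined on the hyperplane spanned by the vectors (2ε_j, 1), j ∈ J, together with the isotropic vector δ = (0,1), which sends the reflectable section appropriately, defines a linear isomorphism of ℚ^{(J)} × ℚ carrying Δ₁ onto Δ₂. -/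
/-- The basis vector `ε_j` of the free `ℚ`-vector space `ℚ^(J)`. -/
noncomputable def epsQ {J : Type*} (j : J) : J →₀ ℚ := Finsupp.single j 1

/-- The root system `D_J = {±ε_j ± ε_k : j ≠ k}`. -/
def DJset (J : Type*) : Set (J →₀ ℚ) :=
  {v | ∃ j k : J, j ≠ k ∧ (v = epsQ j + epsQ k ∨ v = epsQ j - epsQ k ∨
    v = -epsQ j + epsQ k ∨ v = -epsQ j - epsQ k)}

/-- The long roots `(C_J)_lg = {±2ε_j}`. -/
def CJlgset (J : Type*) : Set (J →₀ ℚ) :=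
  {v | ∃ j : J, v = (2 : ℚ) • epsQ j ∨ v = -((2 : ℚ) • epsQ j)}

/-- The root system `C_J = {±2ε_j} ∪ D_J`. -/
def CJset (J : Type*) : Set (J →₀ ℚ) := CJlgset J ∪ DJset J

/-- `Δ₁ = (D_J × ℤ) ∪ ((C_J)_lg × (2ℤ+1))` inside `ℚ^(J) × ℚ`. -/
def Delta1 (J : Type*) : Set ((J →₀ ℚ) × ℚ) :=
  {p | (p.1 ∈ DJset J ∧ ∃ m : ℤ, p.2 = (m : ℚ)) ∨
    (p.1 ∈ CJlgset J ∧ ∃ m : ℤ, p.2 = 2 * (m : ℚ) + 1)}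

/-- `Δ₂ = C_J^{(2)} = (C_J × 2ℤ) ∪ (D_J × (2ℤ+1))` inside `ℚ^(J) × ℚ`. -/
def Delta2 (J : Type*) : Set ((J →₀ ℚ) × ℚ) :=
  {p | (p.1 ∈ CJset J ∧ ∃ m : ℤ, p.2 = 2 * (m : ℚ)) ∨
    (p.1 ∈ DJset J ∧ ∃ m : ℤ, p.2 = 2 * (m : ℚ) + 1)}

/-!
The isomorphism is the shear `(α, s) ↦ (α, s + ⟨α, ρ⟩)` with `ρ = ½ ∑ ε_j`, so that
`⟨α, ρ⟩` is half the coordinate sum of `α`. Since `Δ₂ = (D_J × ℤ) ∪ ((C_J)_lg × 2ℤ)`,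
it suffices that `⟨α, ρ⟩` is an integer on `D_J` (so `D_J × ℤ` is preserved) and an odd
integer on `(C_J)_lg` (so `(C_J)_lg × (2ℤ + 1)` is moved onto `(C_J)_lg × 2ℤ`).
-/

noncomputable def halfCoordSum (J : Type*) : (J →₀ ℚ) →ₗ[ℚ] ℚ :=
  Finsupp.linearCombination ℚ fun _ => (1 / 2 : ℚ)

lemma halfCoordSum_epsQ {J : Type*} (j : J) : halfCoordSum J (epsQ j) = 1 / 2 := by
  simp [halfCoordSum, epsQ]

lemma exists_int_halfCoordSum_of_mem_DJset {J : Type*} {α : J →₀ ℚ} (hα : α ∈ DJset J) :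
    ∃ n : ℤ, halfCoordSum J α = n := by
  obtain ⟨j, k, -, h | h | h | h⟩ := hα <;> subst h
  · exact ⟨1, by simp [halfCoordSum_epsQ]; norm_num⟩
  · exact ⟨0, by simp [halfCoordSum_epsQ]⟩
  · exact ⟨0, by simp [halfCoordSum_epsQ]⟩
  · exact ⟨-1, by simp [halfCoordSum_epsQ]; norm_num⟩

lemma exists_odd_halfCoordSum_of_mem_CJlgset {J : Type*} {α : J →₀ ℚ}
    (hα : α ∈ CJlgset J) : ∃ k : ℤ, halfCoordSum J α = 2 * k + 1 := by
  obtain ⟨j, h | h⟩ := hα <;> subst h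
  · exact ⟨0, by simp [halfCoordSum_epsQ]⟩
  · exact ⟨-1, by simp [halfCoordSum_epsQ]; norm_num⟩

section IntegerLevels

variable {R : Type*} [CommRing R]

lemma exists_int_eq_iff_even_or_odd (x : R) :
    (∃ m : ℤ, x = m) ↔ (∃ m : ℤ, x = 2 * m) ∨ ∃ m : ℤ, x = 2 * m + 1 := by
  constructor
  · rintro ⟨m, rfl⟩
    rcases Int.even_or_odd' m with ⟨t, rfl | rfl⟩
    · exact Or.inl ⟨t, by push_cast; ring⟩
    · exact Or.inr ⟨t, by push_cast; ring⟩
  · rintro (⟨m, rfl⟩ | ⟨m, rfl⟩)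
    · exact ⟨2 * m, by push_cast; ring⟩
    · exact ⟨2 * m + 1, by push_cast; ring⟩

lemma exists_int_add_int_iff (x : R) (n : ℤ) :
    (∃ m : ℤ, x + n = m) ↔ ∃ m : ℤ, x = m :=
  ⟨fun ⟨m, hm⟩ => ⟨m - n, by push_cast; linear_combination hm⟩,
    fun ⟨m, hm⟩ => ⟨m + n, by push_cast; linear_combination hm⟩⟩

lemma exists_even_add_odd_iff (x : R) (k : ℤ) :
    (∃ m : ℤ, x + (2 * k + 1) = 2 * m) ↔ ∃ m : ℤ, x = 2 * m + 1 :=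
  ⟨fun ⟨m, hm⟩ => ⟨m - k - 1, by push_cast; linear_combination hm⟩,
    fun ⟨m, hm⟩ => ⟨m + k + 1, by push_cast; linear_combination hm⟩⟩

end IntegerLevels

lemma Delta2_eq (J : Type*) :
    Delta2 J = {p | (p.1 ∈ DJset J ∧ ∃ m : ℤ, p.2 = (m : ℚ)) ∨
      (p.1 ∈ CJlgset J ∧ ∃ m : ℤ, p.2 = 2 * (m : ℚ))} := by
  ext p
  simp only [Delta2, CJset, Set.mem_union, Set.mem_ofPred_eq, exists_int_eq_iff_even_or_odd]
  tauto

lemma add_halfCoordSum_mem_Delta2_iff {J : Type*} (α : J →₀ ℚ) (s : ℚ) :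
    (α, s + halfCoordSum J α) ∈ Delta2 J ↔ (α, s) ∈ Delta1 J := by
  rw [Delta2_eq]
  simp only [Delta1, Set.mem_ofPred_eq]
  refine or_congr (and_congr_right fun hD => ?_) (and_congr_right fun hC => ?_)
  · obtain ⟨n, hn⟩ := exists_int_halfCoordSum_of_mem_DJset hD
    rw [hn, exists_int_add_int_iff]
  · obtain ⟨k, hk⟩ := exists_odd_halfCoordSum_of_mem_CJlgset hC
    rw [hk, exists_even_add_odd_iff]

theorem stmt_14 (J : Type*) :
    ∃ φ : ((J →₀ ℚ) × ℚ) ≃ₗ[ℚ] ((J →₀ ℚ) × ℚ),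
      (∀ p : (J →₀ ℚ) × ℚ, (φ p).1 = p.1) ∧
      φ (0, 1) = (0, 1) ∧
      φ '' Delta1 J = Delta2 J := by
  let φ := (LinearEquiv.refl ℚ (J →₀ ℚ)).skewProd (LinearEquiv.refl ℚ ℚ) (halfCoordSum J)
  have hpreimage : φ ⁻¹' Delta2 J = Delta1 J := by
    ext ⟨α, s⟩
    exact add_halfCoordSum_mem_Delta2_iff α s
  refine ⟨φ, fun p => rfl, by simp [φ], ?_⟩
  exact ((Set.preimage_eq_iff_eq_image φ.bijective).1 hpreimage).symm
end
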